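/- Let a > 0, c > 0, b > 0 and X > 0 be real numbers. Then ∫₀^X γ(a, b t) · t^{c−1} dt = (b^a X^{a+c} / (a(a+c))) · ∑_{n=0}^{∞} ((a)_n (a+c)_n / ((a+1)_n (a+c+1)_n n!)) (−bX)^n, where the series converges absolutely. -/
import Mathlib

open MeasureTheory

/-- Lower incomplete gamma function `γ(a, x) = ∫₀ˣ t^(a-1) e^(-t) dt`. -/
noncomputable def lowerGamma (a x : ℝ) : ℝ := ∫ t in (0:ℝ)..x, t ^ (a - 1) * Real.exp (-t)

/-- Pochhammer symbol `(q)_n = Γ(q+n)/Γ(q)`. -/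
noncomputable def poch (q : ℝ) (n : ℕ) : ℝ := Real.Gamma (q + n) / Real.Gamma q

/-- The `n`-th series coefficient of `₂F₂(a, a+c; a+1, a+c+1; ·)`. -/
noncomputable def hypTerm (a c : ℝ) (n : ℕ) : ℝ :=
  poch a n * poch (a + c) n / (poch (a + 1) n * poch (a + c + 1) n * n.factorial)

open intervalIntegral in
lemma integral_Ioc_rpow' {x p : ℝ} (hx : 0 < x) (hp : 0 < p) :
    ∫ t in Set.Ioc (0:ℝ) x, t ^ (p - 1) = x ^ p / p := by
  rw [← integral_of_le hx.le, integral_rpow (Or.inl (by linarith)),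
    sub_add_cancel, Real.zero_rpow hp.ne']
  ring

lemma exp_neg_eq_tsum (t : ℝ) : Real.exp (-t) = ∑' n : ℕ, (-t) ^ n / n.factorial := by
  rw [Real.exp_eq_exp_ℝ, NormedSpace.exp_eq_tsum_div]

lemma integrableOn_rpow_Ioc {x p : ℝ} (hx : 0 < x) (hp : 0 < p) :
    IntegrableOn (fun t : ℝ => t ^ (p - 1)) (Set.Ioc 0 x) := by
  exact (intervalIntegral.intervalIntegrable_rpow' (by linarith)).1

lemma summable_aux {x q : ℝ} (hx : 0 < x) (hq : 0 < q) :
    Summable (fun n : ℕ => (1 / (n.factorial : ℝ)) * (x ^ (q + (n:ℝ)) / (q + n))) := by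
  refine Summable.of_nonneg_of_le (f := fun n : ℕ => (x ^ q / q) * (x ^ n / n.factorial))
    (fun n => by positivity) ?_ ((Real.summable_pow_div_factorial x).mul_left _)
  intro n
  have h1 : x ^ (q + (n:ℝ)) = x ^ q * x ^ n := by
    rw [Real.rpow_add hx, Real.rpow_natCast]
  have hf : (0:ℝ) < n.factorial := by exact_mod_cast n.factorial_pos
  rw [h1]
  calc (1:ℝ)/n.factorial * ((x^q*x^n)/(q+n)) = (x^q*x^n)/((q+(n:ℝ))*n.factorial) := by
        have hqn : (q+(n:ℝ)) ≠ 0 := by positivity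
        field_simp
    _ ≤ (x^q*x^n)/(q*n.factorial) := by
        apply div_le_div_of_nonneg_left (by positivity) (by positivity)
        have : (0:ℝ) ≤ n := n.cast_nonneg
        nlinarith
    _ = x^q/q * (x^n/n.factorial) := by ring

lemma lowerGamma_eq_tsum {a x : ℝ} (ha : 0 < a) (hx : 0 < x) :
    lowerGamma a x = ∑' n : ℕ, ((-1:ℝ)^n / n.factorial) * (x ^ (a + (n:ℝ)) / (a + n)) := by
  set F : ℕ → ℝ → ℝ := fun n t => ((-1:ℝ)^n / n.factorial) * t ^ (a + (n:ℝ) - 1) with hF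
  have hFint : ∀ n, IntegrableOn (F n) (Set.Ioc 0 x) := fun n =>
    (integrableOn_rpow_Ioc hx (p := a + n) (by positivity)).const_mul _
  have hFval : ∀ n, ∫ t in Set.Ioc (0:ℝ) x, F n t
      = ((-1:ℝ)^n / n.factorial) * (x ^ (a + (n:ℝ)) / (a + n)) := by
    intro n
    rw [hF]
    simp only []
    rw [MeasureTheory.integral_const_mul, integral_Ioc_rpow' hx (by positivity)]
  have hnorm : ∀ n, ∫ t in Set.Ioc (0:ℝ) x, ‖F n t‖
      = (1 / (n.factorial:ℝ)) * (x ^ (a + (n:ℝ)) / (a + n)) := by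
    intro n
    have : ∀ t ∈ Set.Ioc (0:ℝ) x, ‖F n t‖ = (1 / (n.factorial:ℝ)) * t ^ (a + (n:ℝ) - 1) := by
      intro t ht
      have ht0 : (0:ℝ) ≤ t := ht.1.le
      rw [hF]
      simp only [Real.norm_eq_abs, abs_mul, abs_div, abs_pow, abs_neg, abs_one, one_pow,
        Nat.abs_cast, abs_of_nonneg (Real.rpow_nonneg ht0 _)]
    rw [MeasureTheory.setIntegral_congr_fun measurableSet_Ioc this,
      MeasureTheory.integral_const_mul, integral_Ioc_rpow' hx (by positivity)]
  have hsum : Summable (fun n : ℕ => ∫ t in Set.Ioc (0:ℝ) x, ‖F n t‖) := by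
    simp only [hnorm]
    exact summable_aux hx ha
  have key := MeasureTheory.hasSum_integral_of_summable_integral_norm hFint hsum
  have hpt : ∀ t ∈ Set.Ioc (0:ℝ) x, (∑' n, F n t) = t ^ (a - 1) * Real.exp (-t) := by
    intro t ht
    rw [exp_neg_eq_tsum, ← tsum_mul_left]
    congr 1
    ext n
    rw [hF]
    simp only []
    have : t ^ (a + (n:ℝ) - 1) = t ^ (a - 1) * t ^ n := by
      rw [show a + (n:ℝ) - 1 = (a - 1) + (n:ℝ) by ring, Real.rpow_add ht.1,
        Real.rpow_natCast]
    rw [this, neg_pow t n]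
    ring
  have hInt : lowerGamma a x = ∫ t in Set.Ioc (0:ℝ) x, t ^ (a - 1) * Real.exp (-t) := by
    rw [lowerGamma, intervalIntegral.integral_of_le hx.le]
  rw [hInt, ← MeasureTheory.setIntegral_congr_fun measurableSet_Ioc hpt]
  rw [← key.tsum_eq]
  exact tsum_congr hFval

lemma poch_pos {q : ℝ} (hq : 0 < q) (n : ℕ) : 0 < poch q n :=
  div_pos (Real.Gamma_pos_of_pos (by positivity)) (Real.Gamma_pos_of_pos hq)

lemma poch_succ {q : ℝ} (hq : 0 < q) (n : ℕ) :
    poch (q + 1) n = (q + (n:ℝ)) / q * poch q n := by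
  unfold poch
  rw [show q + 1 + (n:ℝ) = (q + (n:ℝ)) + 1 by ring,
    Real.Gamma_add_one (by positivity), Real.Gamma_add_one hq.ne']
  rw [div_mul_div_comm]

lemma hypTerm_eq {a c : ℝ} (ha : 0 < a) (hc : 0 < c) (n : ℕ) :
    hypTerm a c n = a * (a + c) / ((a + (n:ℝ)) * (a + c + (n:ℝ)) * n.factorial) := by
  have hac : 0 < a + c := by linarith
  have h1 := poch_pos ha n
  have h2 := poch_pos hac n
  have hf : (0:ℝ) < n.factorial := by exact_mod_cast n.factorial_pos
  have han : (0:ℝ) < a + n := by positivity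
  have hacn : (0:ℝ) < a + c + n := by positivity
  rw [hypTerm, poch_succ ha, poch_succ hac]
  field_simp

lemma main_integral {a c b X : ℝ} (ha : 0 < a) (hc : 0 < c) (hb : 0 < b) (hX : 0 < X) :
    ∫ t in Set.Ioc (0:ℝ) X, lowerGamma a (b * t) * t ^ (c - 1)
      = ∑' n : ℕ, ((-1:ℝ)^n * b ^ (a + (n:ℝ)) / (n.factorial * (a + n)))
          * (X ^ (a + (n:ℝ) + c) / (a + (n:ℝ) + c)) := by
  set G : ℕ → ℝ → ℝ := fun n t =>
    ((-1:ℝ)^n * b ^ (a + (n:ℝ)) / (n.factorial * (a + n))) * t ^ (a + (n:ℝ) + c - 1) with hG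
  have hGint : ∀ n, IntegrableOn (G n) (Set.Ioc 0 X) := fun n =>
    (integrableOn_rpow_Ioc hX (p := a + n + c) (by positivity)).const_mul _
  have hGval : ∀ n, ∫ t in Set.Ioc (0:ℝ) X, G n t
      = ((-1:ℝ)^n * b ^ (a + (n:ℝ)) / (n.factorial * (a + n)))
          * (X ^ (a + (n:ℝ) + c) / (a + (n:ℝ) + c)) := by
    intro n
    rw [hG]
    simp only []
    rw [MeasureTheory.integral_const_mul, integral_Ioc_rpow' hX (by positivity)]
  have hnorm : ∀ n, ∫ t in Set.Ioc (0:ℝ) X, ‖G n t‖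
      = (b ^ (a + (n:ℝ)) / (n.factorial * (a + n))) * (X ^ (a + (n:ℝ) + c) / (a + (n:ℝ) + c)) := by
    intro n
    have hcoef : |((-1:ℝ)^n * b ^ (a + (n:ℝ)) / (n.factorial * (a + n)))|
        = b ^ (a + (n:ℝ)) / (n.factorial * (a + n)) := by
      rw [abs_div, abs_mul, abs_pow, abs_neg, abs_one, one_pow, one_mul,
        abs_of_pos (Real.rpow_pos_of_pos hb _), abs_of_pos (by positivity)]
    have : ∀ t ∈ Set.Ioc (0:ℝ) X, ‖G n t‖
        = (b ^ (a + (n:ℝ)) / (n.factorial * (a + n))) * t ^ (a + (n:ℝ) + c - 1) := by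
      intro t ht
      rw [hG]
      simp only [Real.norm_eq_abs, abs_mul, hcoef, abs_of_nonneg (Real.rpow_nonneg ht.1.le _)]
    rw [MeasureTheory.setIntegral_congr_fun measurableSet_Ioc this,
      MeasureTheory.integral_const_mul, integral_Ioc_rpow' hX (by positivity)]
  have hsum : Summable (fun n : ℕ => ∫ t in Set.Ioc (0:ℝ) X, ‖G n t‖) := by
    simp only [hnorm]
    refine Summable.of_nonneg_of_le
      (f := fun n : ℕ => (b ^ a * X ^ (a + c) / (a * (a + c))) * ((b * X) ^ n / n.factorial))
      (fun n => by positivity) ?_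
      ((Real.summable_pow_div_factorial (b * X)).mul_left _)
    intro n
    have hb1 : b ^ (a + (n:ℝ)) = b ^ a * b ^ n := by
      rw [Real.rpow_add hb, Real.rpow_natCast]
    have hX1 : X ^ (a + (n:ℝ) + c) = X ^ (a + c) * X ^ n := by
      rw [show a + (n:ℝ) + c = (a + c) + (n:ℝ) by ring, Real.rpow_add hX, Real.rpow_natCast]
    have hf : (0:ℝ) < n.factorial := by exact_mod_cast n.factorial_pos
    have hn0 : (0:ℝ) ≤ n := n.cast_nonneg
    rw [hb1, hX1]
    simp only [mul_pow]
    calc b ^ a * b ^ n / (↑n.factorial * (a + ↑n)) * (X ^ (a + c) * X ^ n / (a + ↑n + c))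
        = (b ^ a * X ^ (a + c) * (b ^ n * X ^ n)) / ((a + ↑n) * (a + ↑n + c) * ↑n.factorial) := by
          have h1 : (a + (n:ℝ)) ≠ 0 := by positivity
          have h2 : (a + (n:ℝ) + c) ≠ 0 := by positivity
          field_simp
      _ ≤ (b ^ a * X ^ (a + c) * (b ^ n * X ^ n)) / (a * (a + c) * ↑n.factorial) := by
          apply div_le_div_of_nonneg_left (by positivity) (by positivity)
          have key : a * (a + c) ≤ (a + ↑n) * (a + ↑n + c) := by nlinarith
          nlinarith
      _ = b ^ a * X ^ (a + c) / (a * (a + c)) * (b ^ n * X ^ n / ↑n.factorial) := by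
          rw [div_mul_div_comm]
  have key := MeasureTheory.hasSum_integral_of_summable_integral_norm hGint hsum
  have hpt : ∀ t ∈ Set.Ioc (0:ℝ) X, (∑' n, G n t) = lowerGamma a (b * t) * t ^ (c - 1) := by
    intro t ht
    rw [lowerGamma_eq_tsum ha (mul_pos hb ht.1), ← tsum_mul_right]
    congr 1
    ext n
    rw [hG]
    simp only []
    have h1 : (b * t) ^ (a + (n:ℝ)) = b ^ (a + (n:ℝ)) * t ^ (a + (n:ℝ)) :=
      Real.mul_rpow hb.le ht.1.le
    have h2 : t ^ (a + (n:ℝ) + c - 1) = t ^ (a + (n:ℝ)) * t ^ (c - 1) := by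
      rw [show a + (n:ℝ) + c - 1 = (a + (n:ℝ)) + (c - 1) by ring, Real.rpow_add ht.1]
    have hfn : (n.factorial:ℝ) ≠ 0 := by exact_mod_cast n.factorial_ne_zero
    have han : (a+(n:ℝ)) ≠ 0 := by positivity
    rw [h1, h2]
    field_simp
  rw [← MeasureTheory.setIntegral_congr_fun measurableSet_Ioc hpt, ← key.tsum_eq]
  exact tsum_congr hGval

theorem stmt_1 (a c b X : ℝ) (ha : 0 < a) (hc : 0 < c) (hb : 0 < b) (hX : 0 < X) :
    Summable (fun n : ℕ => |hypTerm a c n * (-(b * X)) ^ n|) ∧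
    (∫ t in (0:ℝ)..X, lowerGamma a (b * t) * t ^ (c - 1)) =
      b ^ a * X ^ (a + c) / (a * (a + c)) *
        ∑' n : ℕ, hypTerm a c n * (-(b * X)) ^ n := by
  have hac : 0 < a + c := by linarith
  constructor
  · refine Summable.of_nonneg_of_le (f := fun n : ℕ => (b*X)^n / n.factorial)
      (fun n => abs_nonneg _) ?_ (Real.summable_pow_div_factorial (b*X))
    intro n
    have hf : (0:ℝ) < n.factorial := by exact_mod_cast n.factorial_pos
    have hn0 : (0:ℝ) ≤ n := n.cast_nonneg
    rw [abs_mul, hypTerm_eq ha hc n, abs_pow, abs_neg, abs_of_pos (mul_pos hb hX),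
      abs_of_pos (by positivity : (0:ℝ) < a * (a+c) / ((a+(n:ℝ))*(a+c+(n:ℝ))*n.factorial))]
    have hle : a*(a+c)/((a+(n:ℝ))*(a+c+(n:ℝ))*n.factorial) ≤ 1/n.factorial := by
      rw [div_le_div_iff₀ (by positivity) (by positivity)]
      have h1 : a*(a+c) ≤ (a+(n:ℝ))*(a+c+(n:ℝ)) := by nlinarith
      nlinarith
    calc a*(a+c)/((a+(n:ℝ))*(a+c+(n:ℝ))*n.factorial) * (b*X)^n
        ≤ 1/n.factorial * (b*X)^n := mul_le_mul_of_nonneg_right hle (by positivity)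
      _ = (b*X)^n/n.factorial := by ring
  · rw [intervalIntegral.integral_of_le hX.le, main_integral ha hc hb hX, ← tsum_mul_left]
    apply tsum_congr
    intro n
    have hf : (n.factorial:ℝ) ≠ 0 := by exact_mod_cast n.factorial_ne_zero
    have hn0 : (0:ℝ) ≤ n := n.cast_nonneg
    have h1 : (a+(n:ℝ)) ≠ 0 := by positivity
    have h2 : (a+(n:ℝ)+c) ≠ 0 := by positivity
    have h3 : (a+c+(n:ℝ)) ≠ 0 := by positivity
    have hb1 : b ^ (a + (n:ℝ)) = b ^ a * b ^ n := by
      rw [Real.rpow_add hb, Real.rpow_natCast]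
    have hX1 : X ^ (a + (n:ℝ) + c) = X ^ (a + c) * X ^ n := by
      rw [show a + (n:ℝ) + c = (a + c) + (n:ℝ) by ring, Real.rpow_add hX, Real.rpow_natCast]
    have h4 : (-(b*X))^n = (-1:ℝ)^n * (b^n * X^n) := by rw [neg_pow, mul_pow]
    rw [hypTerm_eq ha hc n, hb1, hX1, h4]
    field_simp
    ring
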